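/- arXiv:1906.02746 — 2 statements merged into one kernel-verified Lean document; each statement's English description precedes it below -/
import Mathlib

section
/- Let u₁, u₂ ∈ ℝ^n be orthonormal and û₁, û₂ ∈ ℝ^n be orthonormal; set U = [u₁ u₂] ∈ ℝ^{n×2}, Û = [û₁ û₂] ∈ ℝ^{n×2}, and δ = ‖(I − Û Ûᵀ) U‖₂. Suppose δ ≤ 1/2. Let ū₁ = Û Ûᵀ u₁ be the orthogonal projection of u₁ onto span{û₁, û₂}, and let ũ₂ be any unit vector lying in span{û₁, û₂} with ⟨ũ₂, ū₁⟩ = 0. Then there exists β ∈ {−1, 1} such that ‖ũ₂ − β u₂‖₂² ≤ 10 δ. -/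
open Matrix MeasureTheory ProbabilityTheory Real

noncomputable section

/-- Euclidean (ℓ₂) norm of a vector in ℝ^n. -/
def norm2 {n : ℕ} (x : Fin n → ℝ) : ℝ := Real.sqrt (∑ i, x i ^ 2)

/-- Entrywise maximum absolute value (ℓ_∞ norm) of a vector in ℝ^n. -/
def normInf {n : ℕ} (x : Fin n → ℝ) : ℝ := ⨆ i, |x i|

/-- Euclidean inner product on ℝ^n. -/
def inner2 {n : ℕ} (x y : Fin n → ℝ) : ℝ := ∑ i, x i * y i

/-- Spectral norm (ℓ₂ operator norm) of a real matrix. -/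
def specNorm {m n : ℕ} (A : Matrix (Fin m) (Fin n) ℝ) : ℝ :=
  ⨆ x : {x : Fin n → ℝ // norm2 x ≤ 1}, norm2 (A.mulVec x.1)

/-- Max-norm: maximum absolute value of the entries of a matrix. -/
def maxNorm {m n : ℕ} (A : Matrix (Fin m) (Fin n) ℝ) : ℝ :=
  ⨆ q : Fin m × Fin n, |A q.1 q.2|

/-- The n×2 matrix with columns u and v. -/
def twoCols {n : ℕ} (u v : Fin n → ℝ) : Matrix (Fin n) (Fin 2) ℝ :=
  Matrix.of fun i j => ![u i, v i] j

/-- The all-ones vector in ℝ^n. -/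
def onesVec (n : ℕ) : Fin n → ℝ := fun _ => 1

/-- `σ1 ≥ σ2 ≥ 0` are the two largest singular values of `H`, with corresponding
orthonormal left singular vectors `u1, u2` (eigenvectors of `H Hᵀ`). -/
def IsTopTwoSingular {n : ℕ} (H : Matrix (Fin n) (Fin n) ℝ)
    (σ1 σ2 : ℝ) (u1 u2 : Fin n → ℝ) : Prop :=
  0 ≤ σ2 ∧ σ2 ≤ σ1 ∧
  inner2 u1 u1 = 1 ∧ inner2 u2 u2 = 1 ∧ inner2 u1 u2 = 0 ∧
  (H * Hᵀ).mulVec u1 = σ1 ^ 2 • u1 ∧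
  (H * Hᵀ).mulVec u2 = σ2 ^ 2 • u2 ∧
  ∀ v : Fin n → ℝ, inner2 v u1 = 0 → inner2 v u2 = 0 →
    inner2 ((H * Hᵀ).mulVec v) v ≤ σ2 ^ 2 * inner2 v v

/-- The uniform probability measure on the interval [−M, M]. -/
def unifIcc (M : ℝ) : Measure ℝ :=
  (ENNReal.ofReal (2 * M))⁻¹ • volume.restrict (Set.Icc (-M) M)

/-- The ERO mixture law of a single pairwise measurement `R_{ij}` (with `a = r_i`, `b = r_j`):
`a − b` w.p. `ηp`, uniform on `[−M, M]` w.p. `(1−η)p`, and `0` w.p. `1−p`. -/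
def EROmix (M p η a b : ℝ) : Measure ℝ :=
  ENNReal.ofReal (η * p) • Measure.dirac (a - b) +
    ENNReal.ofReal ((1 - η) * p) • unifIcc M +
    ENNReal.ofReal (1 - p) • Measure.dirac (0 : ℝ)

/-- The Erdős–Rényi Outliers (ERO) model: `H` is skew-symmetric with zero diagonal, the
above-diagonal entries are jointly independent, and each `H_{ij}` (i < j) has the ERO
mixture law. -/
structure IsEROModel {Ω : Type} [MeasurableSpace Ω] (P : Measure Ω)
    {n : ℕ} (M p η : ℝ) (r : Fin n → ℝ)
    (H : Ω → Matrix (Fin n) (Fin n) ℝ) : Prop where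
  diag : ∀ ω i, H ω i i = 0
  skew : ∀ ω i j, H ω j i = - H ω i j
  meas : ∀ i j, Measurable fun ω => H ω i j
  indep : iIndepFun (m := fun _ => Real.measurableSpace)
    (fun (q : {q : Fin n × Fin n // q.1 < q.2}) ω => H ω q.1.1 q.1.2) P
  law : ∀ i j : Fin n, i < j →
    Measure.map (fun ω => H ω i j) P = EROmix M p η (r i) (r j)

/-! In orthonormal coordinates `(û₁, û₂)` of the plane `K = span {û₁, û₂}` write `u_k = p_k + r_k`
with `p_k ∈ K` and `‖r_k‖ ≤ δ`. Then `‖p_k‖² = 1 - ‖r_k‖² ≥ 1 - δ²` and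
`|⟨p₁, p₂⟩| = |⟨r₁, r₂⟩| ≤ δ²`. Since `K` is a plane and `ũ₂ ⊥ p₁` is a unit vector,
`⟨ũ₂, p₂⟩² ‖p₁‖² = ‖p₁‖² ‖p₂‖² - ⟨p₁, p₂⟩²`, so `⟨ũ₂, u₂⟩ = ⟨ũ₂, p₂⟩ = ±(1 - O(δ²))`, and
`‖ũ₂ - β u₂‖² = 2 - 2 β ⟨ũ₂, u₂⟩` is small for the matching sign `β`. -/

/- `(a, b) = ±(-y₁, x₁) / ‖(x₁, y₁)‖`, so the first term is `(x₁ y₂ - y₁ x₂)²` and the claim is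
Lagrange's identity. -/
theorem sq_inner_mul_add_sq_inner_eq_of_unit_perp {a b x₁ y₁ x₂ y₂ : ℝ}
    (hab : a ^ 2 + b ^ 2 = 1) (hperp : a * x₁ + b * y₁ = 0) :
    (a * x₂ + b * y₂) ^ 2 * (x₁ ^ 2 + y₁ ^ 2) + (x₁ * x₂ + y₁ * y₂) ^ 2 =
      (x₁ ^ 2 + y₁ ^ 2) * (x₂ ^ 2 + y₂ ^ 2) := by
  linear_combination
    ((a * x₂ + b * y₂) ^ 2 * (a * x₁ + b * y₁) -
        (x₁ * y₂ - y₁ * x₂ - (a * x₂ + b * y₂) * (a * y₁ - b * x₁)) * (a * y₂ - b * x₂)) * hperp +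
      (-(a * x₂ + b * y₂) ^ 2 * (x₁ ^ 2 + y₁ ^ 2) +
        (x₁ * y₂ - y₁ * x₂ - (a * x₂ + b * y₂) * (a * y₁ - b * x₁)) * (x₁ * y₂ - y₁ * x₂)) * hab

theorem one_sub_abs_le_of_sq_mul_add_sq_eq {δ X s t g : ℝ} (hδ₀ : 0 ≤ δ) (hδ : δ ≤ 1 / 2)
    (hs : 1 - δ ^ 2 ≤ s) (ht : 1 - δ ^ 2 ≤ t) (ht₁ : t ≤ 1) (hg : |g| ≤ δ ^ 2)
    (hX : X ^ 2 * s + g ^ 2 = s * t) : 1 - |X| ≤ 5 * δ := by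
  have hs₀ : 3 / 4 ≤ s := by nlinarith
  have hg₂ : g ^ 2 ≤ δ ^ 2 / 4 := by
    have hδ₂ : δ ^ 2 ≤ 1 / 4 := by nlinarith
    calc g ^ 2 = |g| ^ 2 := (sq_abs g).symm
      _ ≤ (δ ^ 2) ^ 2 := by gcongr
      _ ≤ δ ^ 2 / 4 := by nlinarith [sq_nonneg δ]
  have hX₁ : X ^ 2 ≤ 1 := by nlinarith
  have hXabs : X ^ 2 ≤ |X| := by
    rw [← sq_abs] at hX₁ ⊢; nlinarith [abs_nonneg X]
  have hX₂ : 1 - δ ^ 2 - δ ^ 2 / 3 ≤ X ^ 2 := by nlinarith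
  nlinarith

section PairProjection

variable {E : Type*} [NormedAddCommGroup E] [InnerProductSpace ℝ E]

def projPair (e₁ e₂ x : E) : E := inner ℝ e₁ x • e₁ + inner ℝ e₂ x • e₂

theorem real_inner_eq_add_inner_sub_projPair {e₁ e₂ : E} (he₁ : ‖e₁‖ = 1) (he₂ : ‖e₂‖ = 1)
    (he₁₂ : inner ℝ e₁ e₂ = 0) (x y : E) :
    inner ℝ x y = inner ℝ e₁ x * inner ℝ e₁ y + inner ℝ e₂ x * inner ℝ e₂ y +
      inner ℝ (x - projPair e₁ e₂ x) (y - projPair e₁ e₂ y) := by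
  have he₂₁ : inner ℝ e₂ e₁ = 0 := by rw [real_inner_comm]; exact he₁₂
  simp only [projPair, inner_sub_left, inner_sub_right, inner_add_left, inner_add_right,
    real_inner_smul_left, real_inner_smul_right, real_inner_self_eq_norm_sq, he₁, he₂, he₁₂, he₂₁,
    real_inner_comm e₁ x, real_inner_comm e₂ x]
  ring

theorem inner_smul_add_smul_smul_add_smul {e₁ e₂ : E} (he₁ : ‖e₁‖ = 1) (he₂ : ‖e₂‖ = 1)
    (he₁₂ : inner ℝ e₁ e₂ = 0) (a b c d : ℝ) :
    inner ℝ (a • e₁ + b • e₂) (c • e₁ + d • e₂) = a * c + b * d := by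
  have he₂₁ : inner ℝ e₂ e₁ = 0 := by rw [real_inner_comm]; exact he₁₂
  simp only [inner_add_left, inner_add_right, real_inner_smul_left, real_inner_smul_right,
    real_inner_self_eq_norm_sq, he₁, he₂, he₁₂, he₂₁]
  ring

theorem norm_sq_eq_add_norm_sub_projPair_sq {e₁ e₂ : E} (he₁ : ‖e₁‖ = 1) (he₂ : ‖e₂‖ = 1)
    (he₁₂ : inner ℝ e₁ e₂ = 0) (x : E) :
    ‖x‖ ^ 2 = inner ℝ e₁ x ^ 2 + inner ℝ e₂ x ^ 2 + ‖x - projPair e₁ e₂ x‖ ^ 2 := by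
  simp only [← real_inner_self_eq_norm_sq]
  rw [real_inner_eq_add_inner_sub_projPair he₁ he₂ he₁₂ x x]
  ring

theorem exists_sign_norm_sub_smul_sq_eq {w u : E} (hw : ‖w‖ = 1) (hu : ‖u‖ = 1) :
    ∃ β : ℝ, (β = -1 ∨ β = 1) ∧ ‖w - β • u‖ ^ 2 = 2 - 2 * |inner ℝ w u| := by
  rcases le_total 0 (inner ℝ w u) with hwu | hwu
  · refine ⟨1, Or.inr rfl, ?_⟩
    rw [one_smul, norm_sub_sq_real, hw, hu, abs_of_nonneg hwu]
    ring
  · refine ⟨-1, Or.inl rfl, ?_⟩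
    rw [neg_one_smul, sub_neg_eq_add, norm_add_sq_real, hw, hu, abs_of_nonpos hwu]
    ring

theorem exists_sign_norm_sub_smul_sq_le {e₁ e₂ u₁ u₂ : E} (he₁ : ‖e₁‖ = 1) (he₂ : ‖e₂‖ = 1)
    (he₁₂ : inner ℝ e₁ e₂ = 0) (hu₁ : ‖u₁‖ = 1) (hu₂ : ‖u₂‖ = 1) (hu₁₂ : inner ℝ u₁ u₂ = 0)
    {δ : ℝ} (hδ : δ ≤ 1 / 2) (hr₁ : ‖u₁ - projPair e₁ e₂ u₁‖ ≤ δ)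
    (hr₂ : ‖u₂ - projPair e₁ e₂ u₂‖ ≤ δ) {a b : ℝ} (hw : ‖a • e₁ + b • e₂‖ = 1)
    (hperp : inner ℝ (a • e₁ + b • e₂) (projPair e₁ e₂ u₁) = 0) :
    ∃ β : ℝ, (β = -1 ∨ β = 1) ∧ ‖a • e₁ + b • e₂ - β • u₂‖ ^ 2 ≤ 10 * δ := by
  set r₁ := u₁ - projPair e₁ e₂ u₁
  set r₂ := u₂ - projPair e₁ e₂ u₂
  have hδ₀ : 0 ≤ δ := (norm_nonneg _).trans hr₁
  have hab : a ^ 2 + b ^ 2 = 1 := by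
    have h := inner_smul_add_smul_smul_add_smul he₁ he₂ he₁₂ a b a b
    rw [real_inner_self_eq_norm_sq, hw] at h
    linarith
  have hperp' : a * inner ℝ e₁ u₁ + b * inner ℝ e₂ u₁ = 0 := by
    rwa [projPair, inner_smul_add_smul_smul_add_smul he₁ he₂ he₁₂] at hperp
  have hr₁sq : ‖r₁‖ ^ 2 ≤ δ ^ 2 := by gcongr
  have hr₂sq : ‖r₂‖ ^ 2 ≤ δ ^ 2 := by gcongr
  have hu₁sq := norm_sq_eq_add_norm_sub_projPair_sq he₁ he₂ he₁₂ u₁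
  have hu₂sq := norm_sq_eq_add_norm_sub_projPair_sq he₁ he₂ he₁₂ u₂
  rw [hu₁, one_pow] at hu₁sq
  rw [hu₂, one_pow] at hu₂sq
  have hg : |inner ℝ e₁ u₁ * inner ℝ e₁ u₂ + inner ℝ e₂ u₁ * inner ℝ e₂ u₂| ≤ δ ^ 2 := by
    have h := real_inner_eq_add_inner_sub_projPair he₁ he₂ he₁₂ u₁ u₂
    have hcoord : inner ℝ e₁ u₁ * inner ℝ e₁ u₂ + inner ℝ e₂ u₁ * inner ℝ e₂ u₂ =
        -inner ℝ r₁ r₂ := by linarith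
    rw [hcoord, abs_neg, sq]
    exact (abs_real_inner_le_norm r₁ r₂).trans (mul_le_mul hr₁ hr₂ (norm_nonneg _) hδ₀)
  have hX := one_sub_abs_le_of_sq_mul_add_sq_eq hδ₀ hδ (by linarith) (by linarith)
    (by linarith [sq_nonneg ‖r₂‖]) hg (sq_inner_mul_add_sq_inner_eq_of_unit_perp hab hperp')
  obtain ⟨β, hβ, hdist⟩ := exists_sign_norm_sub_smul_sq_eq hw hu₂
  refine ⟨β, hβ, ?_⟩
  rw [hdist, inner_add_left, real_inner_smul_left, real_inner_smul_left]
  linarith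

end PairProjection

theorem inner2_eq_inner {n : ℕ} (x y : Fin n → ℝ) :
    inner2 x y = inner ℝ (WithLp.toLp 2 x : EuclideanSpace ℝ (Fin n)) (WithLp.toLp 2 y) := by
  simp [inner2, EuclideanSpace.inner_toLp_toLp, dotProduct, mul_comm]

theorem norm2_eq_norm {n : ℕ} (x : Fin n → ℝ) :
    norm2 x = ‖(WithLp.toLp 2 x : EuclideanSpace ℝ (Fin n))‖ := by
  simp [norm2, EuclideanSpace.norm_eq]

theorem norm_toLp_eq_one {n : ℕ} {x : Fin n → ℝ} (hx : inner2 x x = 1) :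
    ‖(WithLp.toLp 2 x : EuclideanSpace ℝ (Fin n))‖ = 1 := by
  rw [norm_eq_sqrt_real_inner, ← inner2_eq_inner, hx, Real.sqrt_one]

open scoped Matrix.Norms.L2Operator in
theorem norm2_mulVec_le_specNorm {m n : ℕ} (A : Matrix (Fin m) (Fin n) ℝ) {x : Fin n → ℝ}
    (hx : norm2 x ≤ 1) : norm2 (A *ᵥ x) ≤ specNorm A := by
  have hbdd : ∀ y : Fin n → ℝ, norm2 y ≤ 1 → norm2 (A *ᵥ y) ≤ ‖A‖ := fun y hy => by
    rw [norm2_eq_norm] at hy ⊢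
    simpa using (A.l2_opNorm_mulVec (WithLp.toLp 2 y)).trans
      (mul_le_of_le_one_right (norm_nonneg A) hy)
  exact le_ciSup (f := fun y : {y : Fin n → ℝ // norm2 y ≤ 1} => norm2 (A *ᵥ y.1))
    ⟨‖A‖, Set.forall_mem_range.mpr fun y => hbdd y.1 y.2⟩ ⟨x, hx⟩

theorem norm2_mulVec_col_le_specNorm_mul {m k l : ℕ} (A : Matrix (Fin m) (Fin k) ℝ)
    (B : Matrix (Fin k) (Fin l) ℝ) (j : Fin l) : norm2 (A *ᵥ B.col j) ≤ specNorm (A * B) := by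
  have hj : norm2 (Pi.single j 1 : Fin l → ℝ) ≤ 1 := by
    rw [norm2_eq_norm, PiLp.toLp_single, PiLp.norm_single, norm_one]
  have h := norm2_mulVec_le_specNorm (A * B) hj
  rwa [← Matrix.mulVec_mulVec, Matrix.mulVec_single_one] at h

theorem col_twoCols_zero {n : ℕ} (u v : Fin n → ℝ) : (twoCols u v).col 0 = u := by
  ext; simp [twoCols]

theorem col_twoCols_one {n : ℕ} (u v : Fin n → ℝ) : (twoCols u v).col 1 = v := by
  ext; simp [twoCols]

theorem toLp_twoCols_mul_transpose_mulVec {n : ℕ} (v w x : Fin n → ℝ) :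
    (WithLp.toLp 2 ((twoCols v w * (twoCols v w)ᵀ) *ᵥ x) : EuclideanSpace ℝ (Fin n)) =
      projPair (WithLp.toLp 2 v) (WithLp.toLp 2 w) (WithLp.toLp 2 x) := by
  ext i
  rw [← Matrix.mulVec_mulVec]
  simp [projPair, ← inner2_eq_inner, Matrix.mulVec, dotProduct, twoCols, Fin.sum_univ_two, inner2]
  ring

/-- Lemma: analysis of the projection step. -/
theorem stmt_3 {n : ℕ} (u₁ u₂ uh₁ uh₂ : Fin n → ℝ)
    (hu₁ : inner2 u₁ u₁ = 1) (hu₂ : inner2 u₂ u₂ = 1) (hu₁₂ : inner2 u₁ u₂ = 0)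
    (huh₁ : inner2 uh₁ uh₁ = 1) (huh₂ : inner2 uh₂ uh₂ = 1) (huh₁₂ : inner2 uh₁ uh₂ = 0)
    (δ : ℝ)
    (hδdef : δ = specNorm ((1 - twoCols uh₁ uh₂ * (twoCols uh₁ uh₂)ᵀ) * twoCols u₁ u₂))
    (hδ : δ ≤ 1 / 2)
    (ub₁ : Fin n → ℝ) (hub₁ : ub₁ = (twoCols uh₁ uh₂ * (twoCols uh₁ uh₂)ᵀ).mulVec u₁)
    (ut₂ : Fin n → ℝ) (hut₂norm : norm2 ut₂ = 1)
    (hut₂span : ∃ a b : ℝ, ut₂ = a • uh₁ + b • uh₂)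
    (hut₂perp : inner2 ut₂ ub₁ = 0) :
    ∃ β : ℝ, (β = -1 ∨ β = 1) ∧ norm2 (ut₂ - β • u₂) ^ 2 ≤ 10 * δ := by
  obtain ⟨a, b, rfl⟩ := hut₂span
  subst hub₁
  have hres : ∀ j : Fin 2, norm2 ((twoCols u₁ u₂).col j -
      (twoCols uh₁ uh₂ * (twoCols uh₁ uh₂)ᵀ) *ᵥ (twoCols u₁ u₂).col j) ≤ δ := fun j => by
    have h := norm2_mulVec_col_le_specNorm_mul
      (1 - twoCols uh₁ uh₂ * (twoCols uh₁ uh₂)ᵀ) (twoCols u₁ u₂) j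
    rwa [Matrix.sub_mulVec, Matrix.one_mulVec, ← hδdef] at h
  have hr₁ := hres 0
  have hr₂ := hres 1
  rw [col_twoCols_zero] at hr₁
  rw [col_twoCols_one] at hr₂
  simp only [norm2_eq_norm, inner2_eq_inner, WithLp.toLp_sub, WithLp.toLp_add, WithLp.toLp_smul,
    toLp_twoCols_mul_transpose_mulVec] at hu₁₂ huh₁₂ hr₁ hr₂ hut₂norm hut₂perp ⊢
  exact exists_sign_norm_sub_smul_sq_le (norm_toLp_eq_one huh₁) (norm_toLp_eq_one huh₂) huh₁₂
    (norm_toLp_eq_one hu₁) (norm_toLp_eq_one hu₂) hu₁₂ hδ hr₁ hr₂ hut₂norm hut₂perp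

end
end

section
/- Let H = ηp C + Z with ‖Z‖₂ ≤ Δ, and set σ = ηp·√n·‖r − αe‖₂; suppose Δ ≤ σ/3. Let û₁, û₂ ∈ ℝ^n be orthonormal with H Hᵀ ûᵢ = σ̂ᵢ² ûᵢ, where σ̂₁ ≥ σ̂₂ are the two largest singular values of H; set Û = [û₁ û₂], Σ̂ = diag(σ̂₁, σ̂₂), and define E₄ = Z·(ηp C)·Û·Σ̂^{−2}. Then ‖E₄‖_max ≤ (9/(4σ))·( ‖Z u₁‖_∞ + ‖Z u₂‖_∞ ). -/
/-
Writing `e = √n u₁` and `r - α e = ‖r - α e‖ u₂`, the signal is `ηp C = σ (u₂ u₁ᵀ - u₁ u₂ᵀ)`,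
a skew rank-two matrix whose two nonzero singular values both equal `σ`. A Courant–Fischer
argument in the plane of `u₁, u₂` gives Weyl's bound `σ̂₂ ≥ σ - Δ ≥ 2σ/3`. Column `j` of
`Z (ηp C) Û` is `σ ((u₁ ⬝ ûⱼ) Z u₂ - (u₂ ⬝ ûⱼ) Z u₁)`, and `|uᵢ ⬝ ûⱼ| ≤ 1`, so every entry of
`E₄` is at most `σ (9 / (4σ²)) (‖Z u₁‖_∞ + ‖Z u₂‖_∞)`.
-/

open Matrix MeasureTheory ProbabilityTheory Real

noncomputable section

section Norms

variable {n : ℕ}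

lemma inner2_eq_dotProduct (x y : Fin n → ℝ) : inner2 x y = x ⬝ᵥ y := rfl

lemma norm2_eq_norm_toLp (x : Fin n → ℝ) : norm2 x = ‖WithLp.toLp 2 x‖ := by
  simp [norm2, EuclideanSpace.norm_eq]

lemma norm2_eq_sqrt_dotProduct (x : Fin n → ℝ) : norm2 x = √(x ⬝ᵥ x) := by
  simp [norm2, dotProduct, sq]

lemma norm2_pos {x : Fin n → ℝ} (hx : x ≠ 0) : 0 < norm2 x := by
  rw [norm2_eq_norm_toLp]
  exact norm_pos_iff.mpr (by simpa using hx)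

lemma specNorm_eq_norm_toEuclideanCLM (A : Matrix (Fin n) (Fin n) ℝ) :
    specNorm A = ‖toEuclideanCLM (𝕜 := ℝ) A‖ := by
  set T := toEuclideanCLM (n := Fin n) (𝕜 := ℝ) A
  have hle : ∀ x : {x : Fin n → ℝ // norm2 x ≤ 1}, norm2 (A *ᵥ x.1) ≤ ‖T‖ := fun x => by
    have hx := x.2
    rw [norm2_eq_norm_toLp] at hx ⊢
    simpa only [T, toEuclideanCLM_toLp] using T.unit_le_opNorm (WithLp.toLp 2 x.1) hx
  have : Nonempty {x : Fin n → ℝ // norm2 x ≤ 1} := ⟨⟨0, by simp [norm2]⟩⟩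
  refine le_antisymm (ciSup_le hle) ?_
  rw [← T.sSup_unitClosedBall_eq_norm]
  refine csSup_le ((Metric.nonempty_closedBall.2 zero_le_one).image _) ?_
  rintro - ⟨x, hx, rfl⟩
  have hx' : norm2 (WithLp.ofLp x) ≤ 1 := by
    rwa [norm2_eq_norm_toLp, WithLp.toLp_ofLp, ← mem_closedBall_zero_iff]
  have := le_ciSup (f := fun x : {x : Fin n → ℝ // norm2 x ≤ 1} => norm2 (A *ᵥ x.1))
    ⟨‖T‖, Set.forall_mem_range.2 hle⟩ ⟨_, hx'⟩
  rwa [norm2_eq_norm_toLp] at this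

lemma sq_dotProduct_le {ι : Type*} [Fintype ι] (x y : ι → ℝ) :
    (x ⬝ᵥ y) ^ 2 ≤ (x ⬝ᵥ x) * (y ⬝ᵥ y) := by
  simpa [dotProduct, sq] using Finset.sum_mul_sq_le_sq_mul_sq Finset.univ x y

lemma abs_dotProduct_le_one {ι : Type*} [Fintype ι] {u v : ι → ℝ} (hu : u ⬝ᵥ u = 1)
    (hv : v ⬝ᵥ v = 1) : |u ⬝ᵥ v| ≤ 1 :=
  (sq_le_one_iff_abs_le_one _).mp (by simpa [hu, hv] using sq_dotProduct_le u v)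

lemma abs_dotProduct_mulVec_le (A : Matrix (Fin n) (Fin n) ℝ) (v w : Fin n → ℝ) :
    |v ⬝ᵥ A *ᵥ w| ≤ specNorm A * (norm2 v * norm2 w) := by
  set T := toEuclideanCLM (n := Fin n) (𝕜 := ℝ) A
  rw [← inner_toEuclideanCLM, specNorm_eq_norm_toEuclideanCLM, norm2_eq_norm_toLp,
    norm2_eq_norm_toLp]
  calc _ ≤ ‖WithLp.toLp 2 v‖ * ‖T (WithLp.toLp 2 w)‖ := abs_real_inner_le_norm _ _
    _ ≤ ‖WithLp.toLp 2 v‖ * (‖T‖ * ‖WithLp.toLp 2 w‖) := by gcongr; exact T.le_opNorm _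
    _ = _ := by ring

lemma abs_le_normInf (y : Fin n → ℝ) (i : Fin n) : |y i| ≤ normInf y :=
  le_ciSup (f := fun i => |y i|) (Set.finite_range _).bddAbove i

lemma normInf_nonneg (y : Fin n → ℝ) : 0 ≤ normInf y :=
  Real.iSup_nonneg fun _ => abs_nonneg _

end Norms

section TopTwoSingular

variable {n : ℕ}

lemma dotProduct_mul_transpose_mulVec {ι κ R : Type*} [Fintype ι] [Fintype κ] [CommSemiring R]
    (H : Matrix ι κ R) (x y : ι → R) :
    x ⬝ᵥ (H * Hᵀ) *ᵥ y = (x ᵥ* H) ⬝ᵥ (y ᵥ* H) := by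
  rw [← mulVec_mulVec, dotProduct_mulVec, mulVec_transpose]

lemma vecMulVec_sub_vecMulVec_mulVec {ι R : Type*} [Fintype ι] [CommRing R] (u₁ u₂ x : ι → R) :
    (vecMulVec u₂ u₁ - vecMulVec u₁ u₂) *ᵥ x = (u₁ ⬝ᵥ x) • u₂ - (u₂ ⬝ᵥ x) • u₁ := by
  simp [sub_mulVec, vecMulVec_mulVec]

lemma exists_sq_add_sq_pos_and_mul_add_mul_eq_zero (a b : ℝ) :
    ∃ c₁ c₂ : ℝ, 0 < c₁ ^ 2 + c₂ ^ 2 ∧ c₁ * a + c₂ * b = 0 := by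
  by_cases h : a = 0 ∧ b = 0
  · exact ⟨1, 0, by norm_num, by simp [h.1]⟩
  · refine ⟨-b, a, ?_, by ring⟩
    rcases not_and_or.mp h with h | h <;> nlinarith [sq_pos_of_ne_zero h]

variable {H : Matrix (Fin n) (Fin n) ℝ} {σ₁ σ₂ : ℝ} {v₁ v₂ : Fin n → ℝ}

lemma IsTopTwoSingular.dotProduct_mulVec_le (h : IsTopTwoSingular H σ₁ σ₂ v₁ v₂)
    {x : Fin n → ℝ} (hx : x ⬝ᵥ v₁ = 0) : x ⬝ᵥ (H * Hᵀ) *ᵥ x ≤ σ₂ ^ 2 * (x ⬝ᵥ x) := by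
  obtain ⟨-, -, -, h₂₂, h₁₂, -, hev₂, hmax⟩ := h
  simp only [inner2_eq_dotProduct] at h₂₂ h₁₂ hmax
  set a := x ⬝ᵥ v₂
  set y := x - a • v₂
  have hy₁ : y ⬝ᵥ v₁ = 0 := by simp [y, hx, dotProduct_comm v₂, h₁₂]
  have hy₂ : y ⬝ᵥ v₂ = 0 := by simp [y, h₂₂, a]
  have hv₂y : v₂ ⬝ᵥ (H * Hᵀ) *ᵥ y = 0 := by
    rw [dotProduct_mul_transpose_mulVec, dotProduct_comm, ← dotProduct_mul_transpose_mulVec, hev₂,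
      dotProduct_smul, hy₂, smul_zero]
  have hmy := hmax y hy₁ hy₂
  rw [dotProduct_comm] at hmy
  rw [show x = y + a • v₂ by simp [y]]
  simp only [mulVec_add, mulVec_smul, hev₂, dotProduct_add, add_dotProduct, dotProduct_smul,
    smul_dotProduct, hv₂y, hy₂, h₂₂, dotProduct_comm v₂ y, smul_eq_mul]
  nlinarith

/-- Weyl's inequality for `σ₂`: both nonzero singular values of `σ (u₂ u₁ᵀ - u₁ u₂ᵀ)` equal `σ`. -/
theorem IsTopTwoSingular.sub_le_of_eq_smul_skew_add (htop : IsTopTwoSingular H σ₁ σ₂ v₁ v₂)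
    {u₁ u₂ : Fin n → ℝ} (h₁₁ : u₁ ⬝ᵥ u₁ = 1) (h₂₂ : u₂ ⬝ᵥ u₂ = 1) (h₁₂ : u₁ ⬝ᵥ u₂ = 0)
    {σ Δ : ℝ} {Z : Matrix (Fin n) (Fin n) ℝ}
    (hH : H = σ • (vecMulVec u₂ u₁ - vecMulVec u₁ u₂) + Z) (hZ : specNorm Z ≤ Δ) (hΔ : Δ ≤ σ) :
    σ - Δ ≤ σ₂ := by
  -- `v` in the plane of `u₁, u₂` is orthogonal to `v₁`, so `vᵀ H Hᵀ v ≤ σ₂² ‖v‖²`; its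
  -- rotation `w` satisfies `(σ (u₂ u₁ᵀ - u₁ u₂ᵀ)) w = σ v`, so `vᵀ H w ≥ (σ - Δ) ‖v‖²`.
  obtain ⟨c₁, c₂, hs, hc⟩ := exists_sq_add_sq_pos_and_mul_add_mul_eq_zero (u₁ ⬝ᵥ v₁) (u₂ ⬝ᵥ v₁)
  set s := c₁ ^ 2 + c₂ ^ 2
  set v := c₁ • u₁ + c₂ • u₂
  set w := c₂ • u₁ - c₁ • u₂
  have h₂₁ : u₂ ⬝ᵥ u₁ = 0 := by rw [dotProduct_comm, h₁₂]
  have hv₁ : v ⬝ᵥ v₁ = 0 := by simpa [v] using hc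
  have hvv : v ⬝ᵥ v = s := by
    simp only [v, s, add_dotProduct, dotProduct_add, smul_dotProduct, dotProduct_smul, h₁₁, h₂₂,
      h₁₂, h₂₁, smul_eq_mul]
    ring
  have hww : w ⬝ᵥ w = s := by
    simp only [w, s, sub_dotProduct, dotProduct_sub, smul_dotProduct, dotProduct_smul, h₁₁, h₂₂,
      h₁₂, h₂₁, smul_eq_mul]
    ring
  have hHw : H *ᵥ w = σ • v + Z *ᵥ w := by
    rw [hH, add_mulVec, smul_mulVec, vecMulVec_sub_vecMulVec_mulVec]
    simp only [v, w, dotProduct_sub, dotProduct_smul, h₁₁, h₂₂, h₁₂, h₂₁, smul_eq_mul]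
    module
  have hlow : (σ - Δ) * s ≤ v ⬝ᵥ H *ᵥ w := by
    have hZvw := abs_dotProduct_mulVec_le Z v w
    rw [norm2_eq_sqrt_dotProduct, norm2_eq_sqrt_dotProduct, hvv, hww,
      Real.mul_self_sqrt hs.le] at hZvw
    rw [hHw, dotProduct_add, dotProduct_smul, hvv, smul_eq_mul]
    nlinarith [(abs_le.mp hZvw).1]
  have hup : (v ⬝ᵥ H *ᵥ w) ^ 2 ≤ (σ₂ * s) ^ 2 :=
    calc (v ⬝ᵥ H *ᵥ w) ^ 2 = ((v ᵥ* H) ⬝ᵥ w) ^ 2 := by rw [dotProduct_mulVec]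
      _ ≤ ((v ᵥ* H) ⬝ᵥ (v ᵥ* H)) * (w ⬝ᵥ w) := sq_dotProduct_le _ _
      _ = (v ⬝ᵥ (H * Hᵀ) *ᵥ v) * s := by rw [dotProduct_mul_transpose_mulVec, hww]
      _ ≤ (σ₂ ^ 2 * s) * s := by gcongr; simpa [hvv] using htop.dotProduct_mulVec_le hv₁
      _ = (σ₂ * s) ^ 2 := by ring
  have hσΔs : 0 ≤ (σ - Δ) * s := mul_nonneg (sub_nonneg.mpr hΔ) hs.le
  have hσ₂s : (σ - Δ) * s ≤ σ₂ * s :=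
    (pow_le_pow_iff_left₀ hσΔs (mul_nonneg htop.1 hs.le) two_ne_zero).mp
      ((pow_le_pow_left₀ hσΔs hlow 2).trans hup)
  exact le_of_mul_le_mul_right hσ₂s hs

end TopTwoSingular

lemma mul_twoCols_mul_diagonal_apply {m n : ℕ} (M : Matrix (Fin m) (Fin n) ℝ)
    (u v : Fin n → ℝ) (d : Fin 2 → ℝ) (i : Fin m) (j : Fin 2) :
    (M * twoCols u v * diagonal d) i j = (M *ᵥ ![u, v] j) i * d j := by
  rw [mul_diagonal, mul_apply]
  fin_cases j <;> rfl

lemma abs_mul_sub_mul_mul_inv_sq_le {σ σ' a b s t A B : ℝ} (hσ : 0 < σ) (hσ' : 2 * σ / 3 ≤ σ')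
    (hs : |s| ≤ 1) (ht : |t| ≤ 1) (ha : |a| ≤ A) (hb : |b| ≤ B) :
    |σ * (s * a - t * b) * (σ' ^ 2)⁻¹| ≤ 9 / (4 * σ) * (A + B) := by
  have hσ'0 : 0 < σ' := by linarith
  have hst : |s * a - t * b| ≤ A + B :=
    calc |s * a - t * b| ≤ |s| * |a| + |t| * |b| := by
          rw [← abs_mul, ← abs_mul]; exact abs_sub _ _
      _ ≤ 1 * A + 1 * B := by gcongr
      _ = A + B := by ring
  have hfac : σ * (σ' ^ 2)⁻¹ ≤ 9 / (4 * σ) := by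
    rw [← div_eq_mul_inv, div_le_div_iff₀ (by positivity) (by positivity)]
    nlinarith
  calc |σ * (s * a - t * b) * (σ' ^ 2)⁻¹| = σ * (σ' ^ 2)⁻¹ * |s * a - t * b| := by
        rw [abs_mul, abs_mul, abs_of_pos hσ, abs_of_pos (inv_pos.mpr (pow_pos hσ'0 2))]
        ring
    _ ≤ 9 / (4 * σ) * (A + B) := by gcongr

theorem maxNorm_mul_smul_skew_mul_twoCols_le {m n : ℕ} (Z : Matrix (Fin m) (Fin n) ℝ)
    {u₁ u₂ v₁ v₂ : Fin n → ℝ} (hu₁ : u₁ ⬝ᵥ u₁ = 1) (hu₂ : u₂ ⬝ᵥ u₂ = 1)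
    (hv₁ : v₁ ⬝ᵥ v₁ = 1) (hv₂ : v₂ ⬝ᵥ v₂ = 1) {σ σ₁ σ₂ : ℝ} (hσ : 0 < σ)
    (hσ₁ : 2 * σ / 3 ≤ σ₁) (hσ₂ : 2 * σ / 3 ≤ σ₂) :
    maxNorm (Z * (σ • (vecMulVec u₂ u₁ - vecMulVec u₁ u₂)) * twoCols v₁ v₂ *
        diagonal ![(σ₁ ^ 2)⁻¹, (σ₂ ^ 2)⁻¹]) ≤
      9 / (4 * σ) * (normInf (Z *ᵥ u₁) + normInf (Z *ᵥ u₂)) := by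
  have hcol : ∀ x, (Z * (σ • (vecMulVec u₂ u₁ - vecMulVec u₁ u₂))) *ᵥ x =
      σ • ((u₁ ⬝ᵥ x) • Z *ᵥ u₂ - (u₂ ⬝ᵥ x) • Z *ᵥ u₁) := fun x => by
    rw [← mulVec_mulVec, smul_mulVec, vecMulVec_sub_vecMulVec_mulVec, mulVec_smul, mulVec_sub,
      mulVec_smul, mulVec_smul]
  have hentry : ∀ {v : Fin n → ℝ} {σ' : ℝ}, v ⬝ᵥ v = 1 → 2 * σ / 3 ≤ σ' → ∀ i,
      |((Z * (σ • (vecMulVec u₂ u₁ - vecMulVec u₁ u₂))) *ᵥ v) i * (σ' ^ 2)⁻¹| ≤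
        9 / (4 * σ) * (normInf (Z *ᵥ u₁) + normInf (Z *ᵥ u₂)) := fun hv hσ' i => by
    rw [hcol, add_comm]
    simpa using abs_mul_sub_mul_mul_inv_sq_le hσ hσ' (abs_dotProduct_le_one hu₁ hv)
      (abs_dotProduct_le_one hu₂ hv) (abs_le_normInf _ i) (abs_le_normInf _ i)
  have hbound : 0 ≤ 9 / (4 * σ) * (normInf (Z *ᵥ u₁) + normInf (Z *ᵥ u₂)) :=
    mul_nonneg (by positivity) (add_nonneg (normInf_nonneg _) (normInf_nonneg _))
  refine Real.iSup_le (fun ⟨i, j⟩ => ?_) hbound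
  rw [mul_twoCols_mul_diagonal_apply]
  fin_cases j
  · exact hentry hv₁ hσ₁ i
  · exact hentry hv₂ hσ₂ i

section Centering

variable {n : ℕ}

lemma dotProduct_self_inv_norm2_smul {x : Fin n → ℝ} (hx : norm2 x ≠ 0) :
    ((norm2 x)⁻¹ • x) ⬝ᵥ ((norm2 x)⁻¹ • x) = 1 := by
  have hpos : 0 < x ⬝ᵥ x := Real.sqrt_ne_zero'.mp (norm2_eq_sqrt_dotProduct x ▸ hx)
  rw [norm2_eq_sqrt_dotProduct, smul_dotProduct, dotProduct_smul, smul_eq_mul, smul_eq_mul,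
    ← mul_assoc, ← mul_inv, Real.mul_self_sqrt hpos.le, inv_mul_cancel₀ hpos.ne']

lemma norm2_onesVec : norm2 (onesVec n) = √n := by
  simp [norm2, onesVec]

lemma onesVec_dotProduct_sub_mean (r : Fin n → ℝ) :
    onesVec n ⬝ᵥ (r - (r ⬝ᵥ onesVec n / n) • onesVec n) = 0 := by
  rcases eq_or_ne n 0 with rfl | hn
  · simp
  · have hee : onesVec n ⬝ᵥ onesVec n = n := by simp [onesVec, dotProduct]
    rw [dotProduct_sub, dotProduct_smul, dotProduct_comm _ r, hee, smul_eq_mul,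
      div_mul_cancel₀ _ (Nat.cast_ne_zero.mpr hn), sub_self]

lemma vecMulVec_sub_vecMulVec_eq_smul {ι R : Type*} [CommRing R] {r e u₁ u₂ : ι → R}
    {α a b : R} (he : e = a • u₁) (hr : r - α • e = b • u₂) :
    vecMulVec r e - vecMulVec e r = (b * a) • (vecMulVec u₂ u₁ - vecMulVec u₁ u₂) := by
  have hshift : vecMulVec r e - vecMulVec e r =
      vecMulVec (r - α • e) e - vecMulVec e (r - α • e) := by
    rw [sub_vecMulVec, vecMulVec_sub, smul_vecMulVec, vecMulVec_smul]
    abel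
  rw [hshift, hr, he]
  simp only [smul_vecMulVec, vecMulVec_smul, smul_smul, ← smul_sub, mul_comm a b]

end Centering

theorem stmt_14_general {n : ℕ} (p η : ℝ)
    (hp : 0 < p) (hη : 0 < η)
    (r : Fin n → ℝ)
    (e : Fin n → ℝ) (he : e = onesVec n)
    (α : ℝ) (hα : α = inner2 r e / n) (hne : r ≠ α • e)
    (u₁ u₂ : Fin n → ℝ)
    (hu₁ : u₁ = (Real.sqrt n)⁻¹ • e)
    (hu₂ : u₂ = (norm2 (r - α • e))⁻¹ • (r - α • e))
    (C : Matrix (Fin n) (Fin n) ℝ) (hC : C = vecMulVec r e - vecMulVec e r)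
    (Z : Matrix (Fin n) (Fin n) ℝ) (Δ : ℝ) (hZ : specNorm Z ≤ Δ)
    (H : Matrix (Fin n) (Fin n) ℝ) (hH : H = (η * p) • C + Z)
    (σ : ℝ) (hσ : σ = η * p * Real.sqrt n * norm2 (r - α • e))
    (hΔ : Δ ≤ σ / 3)
    (σh₁ σh₂ : ℝ) (uh₁ uh₂ : Fin n → ℝ)
    (htop : IsTopTwoSingular H σh₁ σh₂ uh₁ uh₂)
    (E₄ : Matrix (Fin n) (Fin 2) ℝ)
    (hE₄ : E₄ = Z * ((η * p) • C) * twoCols uh₁ uh₂ *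
        Matrix.diagonal ![(σh₁ ^ 2)⁻¹, (σh₂ ^ 2)⁻¹]) :
    maxNorm E₄ ≤ 9 / (4 * σ) * (normInf (Z.mulVec u₁) + normInf (Z.mulVec u₂)) := by
  have hn : n ≠ 0 := by rintro rfl; exact hne (Subsingleton.elim _ _)
  have hsn : 0 < √(n : ℝ) := Real.sqrt_pos.mpr (Nat.cast_pos.mpr (Nat.pos_of_ne_zero hn))
  have hr₀ : r - α • e ≠ 0 := sub_ne_zero.mpr hne
  set β := norm2 (r - α • e)
  have hβ : 0 < β := norm2_pos hr₀
  have hσ₀ : 0 < σ := by rw [hσ]; positivity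
  have hu₁₁ : u₁ ⬝ᵥ u₁ = 1 := by
    rw [hu₁, he, ← norm2_onesVec]
    exact dotProduct_self_inv_norm2_smul (norm2_onesVec ▸ hsn.ne')
  have hu₂₂ : u₂ ⬝ᵥ u₂ = 1 := hu₂ ▸ dotProduct_self_inv_norm2_smul hβ.ne'
  have hu₁₂ : u₁ ⬝ᵥ u₂ = 0 := by
    rw [hu₁, hu₂, smul_dotProduct, dotProduct_smul, hα, inner2_eq_dotProduct, he,
      onesVec_dotProduct_sub_mean, smul_zero, smul_zero]
  have hA : (η * p) • C = σ • (vecMulVec u₂ u₁ - vecMulVec u₁ u₂) := by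
    have hr_eq : r - α • e = β • u₂ := by rw [hu₂, smul_inv_smul₀ hβ.ne']
    have he_eq : e = √n • u₁ := by rw [hu₁, smul_inv_smul₀ hsn.ne']
    rw [hC, vecMulVec_sub_vecMulVec_eq_smul he_eq hr_eq, smul_smul, hσ]
    ring_nf
  have hσh₂ : 2 * σ / 3 ≤ σh₂ := by
    have := htop.sub_le_of_eq_smul_skew_add hu₁₁ hu₂₂ hu₁₂ (hA ▸ hH) hZ (by linarith)
    linarith
  obtain ⟨-, hσh₁₂, hv₁, hv₂, -⟩ := htop
  rw [hE₄, hA]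
  exact maxNorm_mul_smul_skew_mul_twoCols_le Z hu₁₁ hu₂₂ hv₁ hv₂ hσ₀ (hσh₂.trans hσh₁₂) hσh₂

/-- Lemma: max-norm bound on `E₄`. -/
theorem stmt_14 {n : ℕ} (hn : 2 ≤ n) (M p η : ℝ) (hM : 0 < M)
    (hp : 0 < p) (hp1 : p ≤ 1) (hη : 0 < η) (hη1 : η ≤ 1)
    (r : Fin n → ℝ) (hr : ∀ i, 0 ≤ r i ∧ r i ≤ M)
    (e : Fin n → ℝ) (he : e = onesVec n)
    (α : ℝ) (hα : α = inner2 r e / n) (hne : r ≠ α • e)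
    (u₁ u₂ : Fin n → ℝ)
    (hu₁ : u₁ = (Real.sqrt n)⁻¹ • e)
    (hu₂ : u₂ = (norm2 (r - α • e))⁻¹ • (r - α • e))
    (C : Matrix (Fin n) (Fin n) ℝ) (hC : C = vecMulVec r e - vecMulVec e r)
    (Z : Matrix (Fin n) (Fin n) ℝ) (Δ : ℝ) (hZ : specNorm Z ≤ Δ)
    (H : Matrix (Fin n) (Fin n) ℝ) (hH : H = (η * p) • C + Z)
    (σ : ℝ) (hσ : σ = η * p * Real.sqrt n * norm2 (r - α • e))
    (hΔ : Δ ≤ σ / 3)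
    (σh₁ σh₂ : ℝ) (uh₁ uh₂ : Fin n → ℝ)
    (htop : IsTopTwoSingular H σh₁ σh₂ uh₁ uh₂)
    (E₄ : Matrix (Fin n) (Fin 2) ℝ)
    (hE₄ : E₄ = Z * ((η * p) • C) * twoCols uh₁ uh₂ *
        Matrix.diagonal ![(σh₁ ^ 2)⁻¹, (σh₂ ^ 2)⁻¹]) :
    maxNorm E₄ ≤ 9 / (4 * σ) * (normInf (Z.mulVec u₁) + normInf (Z.mulVec u₂)) :=
  stmt_14_general p η hp hη r e he α hα hne u₁ u₂ hu₁ hu₂ C hC Z Δ hZ H hH σ hσ hΔ σh₁ σh₂ uh₁ uh₂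
    htop E₄ hE₄

end
end
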